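/- For λ = −ρ_G (so that all induction parameters λ_i = −(ρ_G)_i) and arbitrary ξ, the n+1 restriction operators rest_0, …, rest_n all lie in Hom_H(π_{ξ,λ}, τ_{η_k(ξ), ν_k(λ)}) for their respective targets; in particular when additionally all the targets coincide, the space of symmetry breaking operators has dimension at least n+1. -/

import Mathlib

/-!
At `λ = −ρ_G` the modulus part of the inducing character is trivial, and `ν_k(−ρ_G) = −ρ_H`,
so only sign characters have to be matched. Right multiplication by `x_k` permutes columns by a
permutation `σ` with `σ k = last`, so `diag(man, 1)·x_k = x_k·b'` where `b'` is `diag(man, 1)`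
conjugated by `σ`. This `b'` lies again in the Borel of `G`: its diagonal is `(d, 1)` permuted by
`σ`, with the `1` at position `k`, and it stays upper triangular because `σ⁻¹` is increasing on
the first `n` indices. The signs left over are exactly those of `η_k(ξ)`.
-/

open Matrix

/-- The embedding `GL_n(ℝ) → GL_{n+1}(ℝ)`, `h ↦ diag(h,1)`. -/
def embH (n : ℕ) (h : Matrix (Fin n) (Fin n) ℝ) : Matrix (Fin (n+1)) (Fin (n+1)) ℝ :=
  fun i j =>
    if hi : (i : ℕ) < n then
      if hj : (j : ℕ) < n then h ⟨i, hi⟩ ⟨j, hj⟩ else 0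
    else if (j : ℕ) < n then 0 else 1

/-- The permutation matrix `x_k` with block form `[[I_k,0,0],[0,0,I_{n-k}],[0,1,0]]`. -/
def xmat (n k : ℕ) : Matrix (Fin (n+1)) (Fin (n+1)) ℝ :=
  fun i j =>
    if ((i : ℕ) < k ∧ j = i) ∨ (k ≤ (i : ℕ) ∧ (i : ℕ) < n ∧ (j : ℕ) = (i : ℕ) + 1)
        ∨ ((i : ℕ) = n ∧ (j : ℕ) = k) then 1 else 0

/-- `f : GL_m(ℝ) → ℂ` lies in the principal series `π_{ξ,λ}` (smooth normalized induction from
the upper triangular Borel): `f(g·man) = ∏ᵢ |dᵢ|^{−λᵢ−ρᵢ}_{ξᵢ} f(g)`, where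
`ρᵢ = (m−1−2i)/2` (0-based) and `|x|^λ_ξ = sgn(x)^ξ |x|^λ`. -/
def PS (m : ℕ) (ξ : Fin m → ℕ) (lam : Fin m → ℂ)
    (f : Matrix (Fin m) (Fin m) ℝ → ℂ) : Prop :=
  ∀ (g u : Matrix (Fin m) (Fin m) ℝ) (d : Fin m → ℝ),
    (∀ i, d i ≠ 0) → u.BlockTriangular id → (∀ i, u i i = 1) →
    f (g * (Matrix.diagonal d * u))
      = (∏ i, (Real.sign (d i) : ℂ) ^ (ξ i)
          * ((|d i| : ℝ) : ℂ) ^ (-(lam i) - ((m : ℂ) - 1 - 2 * (i : ℕ)) / 2)) * f g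

/-- The restriction operator `rest_k f (h) = f(diag(h,1)·x_k)`. -/
def restk (n k : ℕ) (f : Matrix (Fin (n+1)) (Fin (n+1)) ℝ → ℂ)
    (h : Matrix (Fin n) (Fin n) ℝ) : ℂ :=
  f (embH n h * xmat n k)

/-- `η_k(ξ) = (ξ_1,…,ξ_k, ξ_{k+2},…,ξ_{n+1})`. -/
def etak (n k : ℕ) (ξ : Fin (n+1) → ℕ) : Fin n → ℕ :=
  fun i => if (i : ℕ) < k then ξ i.castSucc else ξ i.succ

/-- `ν_k(λ) = (λ_1+½,…,λ_k+½, λ_{k+2}−½,…,λ_{n+1}−½)`. -/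
noncomputable def nuk (n k : ℕ) (lam : Fin (n+1) → ℂ) : Fin n → ℂ :=
  fun i => if (i : ℕ) < k then lam i.castSucc + 1/2 else lam i.succ - 1/2

section

variable {n : ℕ}

@[simp] lemma embH_castSucc_castSucc (M : Matrix (Fin n) (Fin n) ℝ) (i j : Fin n) :
    embH n M i.castSucc j.castSucc = M i j := by simp [embH]

@[simp] lemma embH_castSucc_last (M : Matrix (Fin n) (Fin n) ℝ) (i : Fin n) :
    embH n M i.castSucc (Fin.last n) = 0 := by simp [embH]

@[simp] lemma embH_last_castSucc (M : Matrix (Fin n) (Fin n) ℝ) (j : Fin n) :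
    embH n M (Fin.last n) j.castSucc = 0 := by simp [embH]

@[simp] lemma embH_last_last (M : Matrix (Fin n) (Fin n) ℝ) :
    embH n M (Fin.last n) (Fin.last n) = 1 := by simp [embH]

lemma embH_mul (A B : Matrix (Fin n) (Fin n) ℝ) :
    embH n (A * B) = embH n A * embH n B := by
  ext i j
  rw [mul_apply, Fin.sum_univ_castSucc]
  induction i using Fin.lastCases <;> induction j using Fin.lastCases <;> simp [mul_apply]

lemma embH_diagonal (d : Fin n → ℝ) :
    embH n (diagonal d) = diagonal (Fin.snoc d 1) := by
  ext i j
  induction i using Fin.lastCases <;> induction j using Fin.lastCases <;>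
    simp [diagonal_apply, Fin.castSucc_ne_last, (Fin.castSucc_ne_last _).symm]

lemma embH_apply_self {u : Matrix (Fin n) (Fin n) ℝ} (hu : ∀ i, u i i = 1) (i : Fin (n + 1)) :
    embH n u i i = 1 := by
  induction i using Fin.lastCases <;> simp [hu]

lemma blockTriangular_embH {α : Type*} [Preorder α] {u : Matrix (Fin n) (Fin n) ℝ}
    {b : Fin (n + 1) → α} (hu : u.BlockTriangular (b ∘ Fin.castSucc)) :
    (embH n u).BlockTriangular b := by
  intro i j hij
  induction i using Fin.lastCases <;> induction j using Fin.lastCases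
  · exact absurd hij (lt_irrefl _)
  · simp
  · simp
  · simpa using hu hij

def xperm (p : Fin (n + 1)) : Equiv.Perm (Fin (n + 1)) :=
  (finSuccEquiv' p).trans (finSuccEquiv' (Fin.last n)).symm

@[simp] lemma xperm_self (p : Fin (n + 1)) : xperm p p = Fin.last n := by
  simp [xperm]

@[simp] lemma xperm_succAbove (p : Fin (n + 1)) (i : Fin n) :
    xperm p (p.succAbove i) = i.castSucc := by
  simp [xperm]

lemma xperm_symm_castSucc (p : Fin (n + 1)) (i : Fin n) :
    (xperm p).symm i.castSucc = p.succAbove i := by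
  rw [Equiv.symm_apply_eq, xperm_succAbove]

lemma xmat_eq_submatrix (p : Fin (n + 1)) :
    xmat n p = (1 : Matrix (Fin (n + 1)) (Fin (n + 1)) ℝ).submatrix id (xperm p) := by
  ext i j
  have hi := i.isLt
  rw [submatrix_apply, id, one_apply, xmat]
  refine if_congr ?_ rfl rfl
  obtain rfl | ⟨m, rfl⟩ := p.eq_self_or_eq_succAbove j
  · simp only [xperm_self, Fin.ext_iff, Fin.val_last, and_true]
    omega
  · simp only [xperm_succAbove, Fin.ext_iff, Fin.val_castSucc]
    have hm := m.isLt
    rcases lt_or_ge m.castSucc p with h | h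
    · rw [Fin.succAbove_of_castSucc_lt _ _ h]
      simp only [Fin.lt_def, Fin.val_castSucc] at h ⊢
      omega
    · rw [Fin.succAbove_of_le_castSucc _ _ h]
      simp only [Fin.le_def, Fin.val_castSucc, Fin.val_succ] at h ⊢
      omega

lemma mul_xmat (p : Fin (n + 1)) (M : Matrix (Fin (n + 1)) (Fin (n + 1)) ℝ) :
    M * xmat n p = M.submatrix id (xperm p) := by
  rw [xmat_eq_submatrix]
  exact mul_submatrix_one (Equiv.refl _) _ M

lemma embH_mul_mul_xmat (p : Fin (n + 1)) (g A : Matrix (Fin n) (Fin n) ℝ) :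
    embH n (g * A) * xmat n p
      = embH n g * xmat n p * (embH n A).submatrix (xperm p) (xperm p) := by
  rw [embH_mul, mul_xmat, mul_xmat, submatrix_mul_equiv]

lemma submatrix_embH_diagonal_mul (p : Fin (n + 1)) (d : Fin n → ℝ)
    (u : Matrix (Fin n) (Fin n) ℝ) :
    (embH n (diagonal d * u)).submatrix (xperm p) (xperm p)
      = diagonal ((Fin.snoc d 1 : Fin (n + 1) → ℝ) ∘ xperm p)
        * (embH n u).submatrix (xperm p) (xperm p) := by
  rw [embH_mul, embH_diagonal, ← submatrix_diagonal_equiv, submatrix_mul_equiv]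

-- `σ⁻¹` restricted to the first `n` indices is `p.succAbove`, which is strictly monotone.
lemma blockTriangular_submatrix_embH_xperm (p : Fin (n + 1)) {u : Matrix (Fin n) (Fin n) ℝ}
    (hu : u.BlockTriangular id) :
    ((embH n u).submatrix (xperm p) (xperm p)).BlockTriangular id := by
  have hsymm : ⇑(xperm p).symm ∘ Fin.castSucc = p.succAbove :=
    funext (xperm_symm_castSucc p)
  have h : (embH n u).BlockTriangular (xperm p).symm := by
    refine blockTriangular_embH ?_
    rw [hsymm]
    exact fun i j hij => hu ((Fin.strictMono_succAbove p).lt_iff_lt.mp hij)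
  simpa using h.submatrix (f := xperm p)

lemma prod_sign_snoc_xperm (p : Fin (n + 1)) (ξ : Fin (n + 1) → ℕ) (d : Fin n → ℝ) :
    ∏ j, (Real.sign (((Fin.snoc d 1 : Fin (n + 1) → ℝ) ∘ xperm p) j) : ℂ) ^ ξ j
      = ∏ i, (Real.sign (d i) : ℂ) ^ ξ (p.succAbove i) := by
  simp [Fin.prod_univ_succAbove _ p]

/-- Membership in `π_{ξ,−ρ}`: at `λ = −ρ` the modulus part of the character is trivial. -/
def SignPS (m : ℕ) (ξ : Fin m → ℕ) (f : Matrix (Fin m) (Fin m) ℝ → ℂ) : Prop :=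
  ∀ (g u : Matrix (Fin m) (Fin m) ℝ) (d : Fin m → ℝ),
    (∀ i, d i ≠ 0) → u.BlockTriangular id → (∀ i, u i i = 1) →
    f (g * (diagonal d * u)) = (∏ i, (Real.sign (d i) : ℂ) ^ (ξ i)) * f g

lemma PS_iff_signPS {m : ℕ} {ξ : Fin m → ℕ} {lam : Fin m → ℂ}
    (hlam : ∀ i, lam i = -(((m : ℂ) - 1 - 2 * (i : ℕ)) / 2))
    (f : Matrix (Fin m) (Fin m) ℝ → ℂ) : PS m ξ lam f ↔ SignPS m ξ f := by
  have hexp : ∀ i, -(lam i) - ((m : ℂ) - 1 - 2 * (i : ℕ)) / 2 = 0 := fun i => by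
    rw [hlam]; ring
  simp only [PS, SignPS, hexp, Complex.cpow_zero, mul_one]

lemma signPS_restk (p : Fin (n + 1)) {ξ : Fin (n + 1) → ℕ}
    {f : Matrix (Fin (n + 1)) (Fin (n + 1)) ℝ → ℂ} (hf : SignPS (n + 1) ξ f) :
    SignPS n (ξ ∘ p.succAbove) (restk n p f) := by
  intro g u d hd hu hud
  have hd' : ∀ l, (Fin.snoc d 1 : Fin (n + 1) → ℝ) l ≠ 0 := fun l => by
    induction l using Fin.lastCases <;> simp [hd]
  have hud' : ∀ j, (embH n u).submatrix (xperm p) (xperm p) j j = 1 := fun j =>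
    embH_apply_self hud _
  rw [restk, embH_mul_mul_xmat, submatrix_embH_diagonal_mul,
    hf _ _ ((Fin.snoc d 1 : Fin (n + 1) → ℝ) ∘ xperm p) (fun j => hd' _)
      (blockTriangular_submatrix_embH_xperm p hu) hud', prod_sign_snoc_xperm]
  rfl

lemma restk_mul {k : ℕ} (f : Matrix (Fin (n + 1)) (Fin (n + 1)) ℝ → ℂ)
    (h₀ h : Matrix (Fin n) (Fin n) ℝ) :
    restk n k f (h₀ * h) = restk n k (fun g => f (embH n h₀ * g)) h := by
  simp only [restk, embH_mul, mul_assoc]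

lemma etak_eq_comp_succAbove {k : ℕ} (hk : k ≤ n) (ξ : Fin (n + 1) → ℕ) :
    etak n k ξ = ξ ∘ (⟨k, Nat.lt_succ_of_le hk⟩ : Fin (n + 1)).succAbove := by
  ext i
  simp [etak, Fin.succAbove, Fin.lt_def, apply_ite ξ]

lemma nuk_eq_neg_rho {lam : Fin (n + 1) → ℂ}
    (hlam : ∀ i, lam i = -(((n : ℂ) - 2 * (i : ℕ)) / 2)) (k : ℕ) (i : Fin n) :
    nuk n k lam i = -(((n : ℂ) - 1 - 2 * (i : ℕ)) / 2) := by
  unfold nuk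
  split_ifs <;> simp only [hlam, Fin.val_castSucc, Fin.val_succ] <;> push_cast <;> ring

end

/-- For `λ = −ρ_G` all the `n+1` restriction operators `rest_0,…,rest_n` are symmetry breaking
operators `π_{ξ,λ} → τ_{η_k(ξ),ν_k(λ)}`: they satisfy the target covariance and are
`H`-equivariant. In particular the space of symmetry breaking operators can have dimension
at least `n+1` at non-generic parameters. -/
theorem stmt11 (n : ℕ) (ξ : Fin (n+1) → ℕ) (lam : Fin (n+1) → ℂ)
    (hlam : ∀ i, lam i = -(((n : ℂ) - 2 * (i : ℕ)) / 2)) :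
    ∀ k ≤ n, ∀ f : Matrix (Fin (n+1)) (Fin (n+1)) ℝ → ℂ, PS (n+1) ξ lam f →
      PS n (etak n k ξ) (nuk n k lam) (restk n k f)
      ∧ ∀ h0 h : Matrix (Fin n) (Fin n) ℝ,
          restk n k f (h0 * h) = restk n k (fun g => f (embH n h0 * g)) h := by
  intro k hk f hf
  have hlamG : ∀ i : Fin (n + 1), lam i = -((((n + 1 : ℕ) : ℂ) - 1 - 2 * (i : ℕ)) / 2) :=
    fun i => by rw [hlam]; push_cast; ring
  refine ⟨?_, restk_mul f⟩
  rw [PS_iff_signPS (nuk_eq_neg_rho hlam k), etak_eq_comp_succAbove hk]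
  exact signPS_restk ⟨k, Nat.lt_succ_of_le hk⟩ ((PS_iff_signPS hlamG f).mp hf)
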